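/- Let φ_Nij(x, y) = ⌊x⌋⌊y⌋ − ⌊⌊x⌋y⌋ − ⌊x⌊y⌋⌋ + ⌊⌊xy⌋⌋ (the Nijenhuis OPI). For any u, v, w ∈ 𝔐(Z) ∖ {1}, with B(x,y) = ⌊x⌋y + x⌊y⌋ − ⌊xy⌋, the element B(B(u,v), w) − B(u, B(v,w)) rewrites to 0 under the rewriting system Π = {⌊a⌋⌊b⌋ → ⌊B(a,b)⌋ : a, b ∈ 𝔐(Z)} on k𝔐(Z); i.e., φ_Nij is of Rota–Baxter type. -/

import Mathlib

/-!
In any ring with an additive operator `P`, the associator of the Nijenhuis product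
`x ⋆ y = x P(y) + P(x) y − P(xy)` decomposes as
`x Φ(y, z) − Φ(x, y) z + Φ(x, yz) − Φ(xy, z)`, where `Φ(x, y) = P(x) P(y) − P(x ⋆ y)`.
For words `u, v, w`, each of the four summands is a rule `⌊a⌋⌊b⌋ − ⌊B(a, b)⌋` of `Π` placed in a
context, with redexes `⌊u⌋⌊vw⌋`, `⌊uv⌋⌊w⌋`, `⌊u⌋⌊v⌋w` and `u⌊v⌋⌊w⌋`. Since `u, v, w ≠ 1`, none of
these redexes occurs in the summands after it (a word beginning with `u` cannot begin with a
bracket enclosing `u`, and one ending with `w` cannot end with a bracket enclosing `w`), so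
rewriting the four redexes in this order removes one summand at a time and reaches `0`.
-/

namespace OpAlg

/-- Letters of the free operated monoid `𝔐(Z)`: a letter is either a variable from `Z`
or a bracketed word `⌊w⌋`. -/
inductive OpLetter (Z : Type u) : Type u
  | var : Z → OpLetter Z
  | floor : List (OpLetter Z) → OpLetter Z

/-- The free operated monoid `𝔐(Z)` on a set `Z`: words in variables and brackets. -/
def OpMonoid (Z : Type u) : Type u := FreeMonoid (OpLetter Z)

instance {Z : Type u} : Monoid (OpMonoid Z) :=
  inferInstanceAs (Monoid (FreeMonoid (OpLetter Z)))

/-- The variable `z` as an element of `𝔐(Z)`. -/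
def OpMonoid.ofVar {Z : Type u} (z : Z) : OpMonoid Z := FreeMonoid.of (OpLetter.var z)

/-- The bracket operation `u ↦ ⌊u⌋` on `𝔐(Z)`. -/
def OpMonoid.flr {Z : Type u} (u : OpMonoid Z) : OpMonoid Z :=
  FreeMonoid.of (OpLetter.floor (FreeMonoid.toList u))

/-- The breadth of `u ∈ 𝔐(Z)`. -/
def OpMonoid.breadth {Z : Type u} (u : OpMonoid Z) : ℕ := (FreeMonoid.toList u).length

variable {X B : Type*} [Monoid B]

mutual
  /-- Evaluation of a letter in a monoid `B` with an operator `P`, sending the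
  variable `x` to `σ x`. -/
  def evalLetter (σ : X → B) (P : B → B) : OpLetter X → B
    | .var x => σ x
    | .floor w => P (evalList σ P w)
  /-- Evaluation of a list of letters (product of the letter evaluations). -/
  def evalList (σ : X → B) (P : B → B) : List (OpLetter X) → B
    | [] => 1
    | a :: w => evalLetter σ P a * evalList σ P w
end

/-- Evaluation of a word `w ∈ 𝔐(X)` in a monoid `B` with operator `P` at `σ : X → B`. -/
def evalWord (σ : X → B) (P : B → B) (w : OpMonoid X) : B :=
  evalList σ P (FreeMonoid.toList w)

/-- Monoid-level substitution `𝔐(X) → 𝔐(Z)`, `xᵢ ↦ σ xᵢ`. -/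
def substW {X Z : Type*} (σ : X → OpMonoid Z) : OpMonoid X → OpMonoid Z :=
  evalWord σ OpMonoid.flr

/-- The free unital operated algebra `k𝔐(Z)` (as a `k`-module: the monoid algebra). -/
abbrev kOpM (k : Type*) [Field k] (Z : Type*) := MonoidAlgebra k (OpMonoid Z)

/-- The operator `P` on `k𝔐(Z)`: linear extension of `u ↦ ⌊u⌋`. -/
noncomputable def opP (k : Type*) [Field k] {Z : Type*} (f : kOpM k Z) : kOpM k Z :=
  MonoidAlgebra.ofCoeff (Finsupp.mapDomain OpMonoid.flr f.coeff)

/-- Evaluation of `φ ∈ k𝔐(X)` in a `k`-algebra `B` with operator `P` at `σ : X → B`: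
`φ(σ x₁, …, σ xₙ)`. -/
noncomputable def evalPoly (k : Type*) [Field k] {X B : Type*} [Semiring B] [Module k B]
    (σ : X → B) (P : B → B) (φ : MonoidAlgebra k (OpMonoid X)) : B :=
  φ.coeff.sum fun w c => c • evalWord σ P w

/-- A context `q ∈ 𝔐⋆(Z)` : a word in `𝔐(Z ∪ {⋆})` with exactly one occurrence of `⋆`. -/
inductive OpCtx (Z : Type u) : Type u
  | hole (u v : OpMonoid Z)
  | floor (u : OpMonoid Z) (q : OpCtx Z) (v : OpMonoid Z)

/-- Substitution `q|_w` of a word `w` for `⋆` in a context `q`. -/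
def OpCtx.subst {Z : Type u} : OpCtx Z → OpMonoid Z → OpMonoid Z
  | .hole u v, w => u * w * v
  | .floor u q v, w => u * OpMonoid.flr (q.subst w) * v

/-- Substitution `q|_f` of a polynomial `f ∈ k𝔐(Z)` for `⋆` in a context `q`. -/
noncomputable def ctxPoly (k : Type*) [Field k] {Z : Type*} (q : OpCtx Z) (f : kOpM k Z) :
    kOpM k Z :=
  MonoidAlgebra.ofCoeff (Finsupp.mapDomain q.subst f.coeff)

/-- The leading monomial of an element of a monoid algebra (the monomial `1` if the
element is a scalar or zero). -/
noncomputable def lm {k : Type*} [Field k] {G : Type*} [Monoid G] [LinearOrder G]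
    (f : MonoidAlgebra k G) : G :=
  if h : f.coeff.support.Nonempty then f.coeff.support.max' h else 1

/-- Division of an element by its leading coefficient. -/
noncomputable def monicize {k : Type*} [Field k] {G : Type*} [Monoid G] [LinearOrder G]
    (f : MonoidAlgebra k G) : MonoidAlgebra k G :=
  (f.coeff (lm f))⁻¹ • f

section GS
variable (k : Type*) [Field k] {Z : Type*} [LinearOrder (OpMonoid Z)]

/-- `f` is trivial modulo `(𝒢, w)` : `f = Σᵢ cᵢ qᵢ|_{sᵢ}` with `qᵢ|_{s̄ᵢ} < w`, `sᵢ ∈ 𝒢`. -/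
def TrivialMod (𝒢 : Set (kOpM k Z)) (w : OpMonoid Z) (f : kOpM k Z) : Prop :=
  f ∈ Submodule.span k
    {g : kOpM k Z | ∃ s ∈ 𝒢, ∃ q : OpCtx Z, g = ctxPoly k q s ∧ q.subst (lm s) < w}

/-- `𝒢 ⊆ k𝔐(Z)` is an operated Gröbner–Shirshov basis: all intersection compositions and
all inclusion compositions of (monicized) pairs of elements of `𝒢` are trivial. -/
def IsOpGS (𝒢 : Set (kOpM k Z)) : Prop :=
  (∀ f ∈ 𝒢, ∀ g ∈ 𝒢, ∀ u v w : OpMonoid Z,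
      w = lm f * u → w = v * lm g →
      max (OpMonoid.breadth (lm f)) (OpMonoid.breadth (lm g)) < OpMonoid.breadth w →
      OpMonoid.breadth w < OpMonoid.breadth (lm f) + OpMonoid.breadth (lm g) →
      TrivialMod k 𝒢 w
        (monicize f * MonoidAlgebra.single u 1 - MonoidAlgebra.single v 1 * monicize g)) ∧
  (∀ f ∈ 𝒢, ∀ g ∈ 𝒢, ∀ q : OpCtx Z, ∀ w : OpMonoid Z,
      w = lm f → w = q.subst (lm g) →
      TrivialMod k 𝒢 w (monicize f - ctxPoly k q (monicize g)))

end GS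

section Assoc
variable (k : Type*) [Field k] {Z : Type*} [LinearOrder (FreeMonoid Z)]

/-- The free unital algebra `kM(Z)` (noncommutative polynomials). -/
abbrev kM (k : Type*) [Field k] (Z : Type*) := MonoidAlgebra k (FreeMonoid Z)

/-- Triviality modulo `(G, w)` in the classical associative sense. -/
def ATrivialMod (G : Set (kM k Z)) (w : FreeMonoid Z) (f : kM k Z) : Prop :=
  f ∈ Submodule.span k
    {g : kM k Z | ∃ s ∈ G, ∃ u v : FreeMonoid Z,
      g = MonoidAlgebra.single u 1 * s * MonoidAlgebra.single v 1 ∧ u * lm s * v < w}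

/-- `G ⊆ kM(Z)` is a Gröbner–Shirshov basis in the classical associative sense. -/
def IsAssocGS (G : Set (kM k Z)) : Prop :=
  (∀ f ∈ G, ∀ g ∈ G, ∀ u v w : FreeMonoid Z,
      w = lm f * u → w = v * lm g →
      max (FreeMonoid.toList (lm f)).length (FreeMonoid.toList (lm g)).length <
        (FreeMonoid.toList w).length →
      (FreeMonoid.toList w).length <
        (FreeMonoid.toList (lm f)).length + (FreeMonoid.toList (lm g)).length →
      ATrivialMod k G w
        (monicize f * MonoidAlgebra.single u 1 - MonoidAlgebra.single v 1 * monicize g)) ∧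
  (∀ f ∈ G, ∀ g ∈ G, ∀ u v w : FreeMonoid Z,
      w = lm f → w = u * lm g * v →
      ATrivialMod k G w
        (monicize f -
          MonoidAlgebra.single u 1 * monicize g * MonoidAlgebra.single v 1))

end Assoc

/-- The embedding of the free monoid `M(Z)` into the free operated monoid `𝔐(Z)`. -/
def embW {Z : Type*} (w : FreeMonoid Z) : OpMonoid Z :=
  (FreeMonoid.map (OpLetter.var) w : FreeMonoid (OpLetter Z))

/-- The embedding `kM(Z) → k𝔐(Z)`. -/
noncomputable def embA (k : Type*) [Field k] {Z : Type*} (f : kM k Z) : kOpM k Z :=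
  MonoidAlgebra.ofCoeff (Finsupp.mapDomain embW f.coeff)

end OpAlg

namespace OpAlg

variable (k : Type*) [Field k] {Z : Type*}

/-- The bilinear map `B(x, y) = x⌊y⌋ + ⌊x⌋y − ⌊xy⌋` of the Nijenhuis OPI
`φ_Nij = ⌊x⌋⌊y⌋ − ⌊B(x, y)⌋`, extended to `k𝔐(Z)`. -/
noncomputable def nijB (f g : kOpM k Z) : kOpM k Z :=
  f * opP k g + opP k f * g - opP k (f * g)

/-- One-step rewriting with respect to the term-rewriting system
`Π = {⌊a⌋⌊b⌋ → ⌊B(a, b)⌋ : a, b ∈ 𝔐(Z)}` on `k𝔐(Z)`: an occurrence of a monomial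
`q|_{⌊a⌋⌊b⌋}` in the support is replaced (with its coefficient) by `q|_{⌊B(a,b)⌋}`. -/
noncomputable def nijStep (f g : kOpM k Z) : Prop :=
  ∃ (a b : OpMonoid Z) (q : OpCtx Z),
    f.coeff (q.subst (OpMonoid.flr a * OpMonoid.flr b)) ≠ 0 ∧
    g = f
      - MonoidAlgebra.single (q.subst (OpMonoid.flr a * OpMonoid.flr b))
          (f.coeff (q.subst (OpMonoid.flr a * OpMonoid.flr b)))
      + f.coeff (q.subst (OpMonoid.flr a * OpMonoid.flr b)) •
          ctxPoly k q (opP k (nijB k (MonoidAlgebra.single a 1) (MonoidAlgebra.single b 1)))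

end OpAlg

namespace OpAlg

section NijenhuisIdentity

variable {A : Type*} [NonUnitalRing A] (P : A →+ A)

def nijenhuisMul (x y : A) : A := x * P y + P x * y - P (x * y)

/-- The Nijenhuis OPI `φ_Nij(x, y)` evaluated in `A`. -/
def nijenhuisDefect (x y : A) : A := P x * P y - P (nijenhuisMul P x y)

theorem nijenhuisMul_assoc_sub (x y z : A) :
    nijenhuisMul P (nijenhuisMul P x y) z - nijenhuisMul P x (nijenhuisMul P y z) =
      x * nijenhuisDefect P y z - nijenhuisDefect P x y * z
        + nijenhuisDefect P x (y * z) - nijenhuisDefect P (x * y) z := by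
  simp only [nijenhuisDefect, nijenhuisMul, map_sub, map_add, mul_add, add_mul, mul_sub, sub_mul,
    mul_assoc]
  abel

end NijenhuisIdentity

section Words

variable {Z : Type*}

theorem OpLetter.floor_not_mem (L : List (OpLetter Z)) : OpLetter.floor L ∉ L := by
  intro h
  have := List.sizeOf_lt_of_mem h
  simp only [OpLetter.floor.sizeOf_spec] at this
  omega

theorem OpMonoid.toList_flr (x : OpMonoid Z) :
    FreeMonoid.toList (OpMonoid.flr x) = [OpLetter.floor (FreeMonoid.toList x)] := rfl

theorem OpMonoid.toList_mul (x y : OpMonoid Z) :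
    FreeMonoid.toList (x * y) = FreeMonoid.toList x ++ FreeMonoid.toList y := rfl

theorem OpMonoid.toList_ne_nil {x : OpMonoid Z} (hx : x ≠ 1) : FreeMonoid.toList x ≠ [] :=
  fun h => hx (FreeMonoid.toList.injective h)

theorem OpMonoid.flr_injective : Function.Injective (OpMonoid.flr (Z := Z)) := fun _ _ h =>
  FreeMonoid.toList.injective (OpLetter.floor.inj (FreeMonoid.of_injective h))

theorem OpMonoid.mul_left_cancel {x y z : OpMonoid Z} (h : x * y = x * z) : y = z :=
  FreeMonoid.toList.injective (List.append_cancel_left (congrArg FreeMonoid.toList h))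

theorem OpMonoid.mul_right_cancel {x y z : OpMonoid Z} (h : y * x = z * x) : y = z :=
  FreeMonoid.toList.injective (List.append_cancel_right (congrArg FreeMonoid.toList h))

theorem OpMonoid.flr_ne_flr_mul_flr (x a b : OpMonoid Z) :
    OpMonoid.flr x ≠ OpMonoid.flr a * OpMonoid.flr b := by
  intro h
  simpa [OpMonoid.toList_flr, OpMonoid.toList_mul] using congrArg (·.toList.length) h

theorem OpMonoid.flr_mul_flr_inj {a b x y : OpMonoid Z} :
    OpMonoid.flr a * OpMonoid.flr b = OpMonoid.flr x * OpMonoid.flr y ↔ a = x ∧ b = y := by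
  refine ⟨fun h => ?_, fun ⟨hax, hby⟩ => hax ▸ hby ▸ rfl⟩
  have h' := congrArg FreeMonoid.toList h
  simp only [OpMonoid.toList_mul, OpMonoid.toList_flr, List.cons_append, List.nil_append,
    List.cons.injEq, OpLetter.floor.injEq, and_true] at h'
  exact ⟨FreeMonoid.toList.injective h'.1, FreeMonoid.toList.injective h'.2⟩

theorem OpMonoid.flr_mul_ne_mul {u x : OpMonoid Z} (hu : u ≠ 1)
    (hux : FreeMonoid.toList u ⊆ FreeMonoid.toList x) (m d : OpMonoid Z) :
    OpMonoid.flr x * m ≠ u * d := by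
  intro h
  obtain ⟨a, u', hu'⟩ := List.exists_cons_of_ne_nil (OpMonoid.toList_ne_nil hu)
  have h' := congrArg FreeMonoid.toList h
  simp only [OpMonoid.toList_mul, OpMonoid.toList_flr, hu', List.cons_append, List.nil_append,
    List.cons.injEq] at h'
  exact OpLetter.floor_not_mem _ (hux (h'.1 ▸ hu' ▸ List.mem_cons_self))

theorem OpMonoid.mul_flr_ne_mul {w x : OpMonoid Z} (hw : w ≠ 1)
    (hwx : FreeMonoid.toList w ⊆ FreeMonoid.toList x) (m d : OpMonoid Z) :
    m * OpMonoid.flr x ≠ d * w := by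
  intro h
  obtain ⟨a, w', hw'⟩ := List.exists_cons_of_ne_nil
    (List.reverse_ne_nil_iff.mpr (OpMonoid.toList_ne_nil hw))
  have h' := congrArg (fun x => (FreeMonoid.toList x).reverse) h
  simp only [OpMonoid.toList_mul, OpMonoid.toList_flr, List.reverse_append, hw',
    List.reverse_cons, List.reverse_nil, List.nil_append, List.cons_append,
    List.cons.injEq] at h'
  refine OpLetter.floor_not_mem _ (hwx (List.mem_reverse.mp ?_))
  exact h'.1 ▸ hw' ▸ List.mem_cons_self

theorem OpCtx.subst_injective (q : OpCtx Z) : Function.Injective q.subst := by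
  induction q with
  | hole u v => exact fun _ _ h => OpMonoid.mul_left_cancel (OpMonoid.mul_right_cancel h)
  | floor u q v ih =>
    exact fun _ _ h => ih (OpMonoid.flr_injective
      (OpMonoid.mul_left_cancel (OpMonoid.mul_right_cancel h)))

end Words

section Polynomials

open MonoidAlgebra

variable (k : Type*) [Field k] {Z : Type*}

noncomputable def opPHom : kOpM k Z →+ kOpM k Z where
  toFun := opP k
  map_zero' := mapDomain_zero _
  map_add' := mapDomain_add _

theorem nijB_eq_nijenhuisMul : nijB k = nijenhuisMul (opPHom k (Z := Z)) := rfl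

/-- The rule `⌊a⌋⌊b⌋ → ⌊B(a, b)⌋` of `Π`, as the element `⌊a⌋⌊b⌋ − ⌊B(a, b)⌋`. -/
noncomputable def nijRel (a b : OpMonoid Z) : kOpM k Z :=
  nijenhuisDefect (opPHom k) (single a 1) (single b 1)

theorem ctxPoly_eq_mapDomainLinearMap (q : OpCtx Z) :
    ctxPoly k q = mapDomainLinearMap k k q.subst := rfl

theorem ctxPoly_hole (u v : OpMonoid Z) (f : kOpM k Z) :
    ctxPoly k (.hole u v) f = single u 1 * f * single v 1 := by
  induction f using MonoidAlgebra.induction_linear with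
  | zero => simp [ctxPoly_eq_mapDomainLinearMap]
  | add f g hf hg =>
    rw [ctxPoly_eq_mapDomainLinearMap, map_add, ← ctxPoly_eq_mapDomainLinearMap, hf, hg, mul_add,
      add_mul]
  | single m c => simp [ctxPoly_eq_mapDomainLinearMap, OpCtx.subst, single_mul_single]

theorem ctxPoly_hole_one_one (f : kOpM k Z) : ctxPoly k (.hole 1 1) f = f := by
  rw [ctxPoly_hole, ← one_def, one_mul, mul_one]

theorem coeff_ctxPoly_subst (q : OpCtx Z) (f : kOpM k Z) (m : OpMonoid Z) :
    (ctxPoly k q f).coeff (q.subst m) = f.coeff m :=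
  Finsupp.mapDomain_apply q.subst_injective _ _

theorem coeff_ctxPoly_of_notMem_range {q : OpCtx Z} {t : OpMonoid Z} (ht : t ∉ Set.range q.subst)
    (f : kOpM k Z) : (ctxPoly k q f).coeff t = 0 :=
  Finsupp.mapDomain_of_notMem_range _ _ ht

theorem coeff_opP_flr_mul_flr (f : kOpM k Z) (a b : OpMonoid Z) :
    (opP k f).coeff (OpMonoid.flr a * OpMonoid.flr b) = 0 :=
  Finsupp.mapDomain_of_notMem_range _ _ fun ⟨x, hx⟩ => OpMonoid.flr_ne_flr_mul_flr x a b hx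

theorem opPHom_single (a : OpMonoid Z) (c : k) :
    opPHom k (single a c) = single (OpMonoid.flr a) c :=
  mapDomain_single

theorem coeff_nijRel_flr_mul_flr (a b x y : OpMonoid Z) :
    (nijRel k a b).coeff (OpMonoid.flr x * OpMonoid.flr y) =
      Finsupp.single (OpMonoid.flr a * OpMonoid.flr b) 1 (OpMonoid.flr x * OpMonoid.flr y) := by
  rw [nijRel, nijenhuisDefect, coeff_sub, opPHom_single, opPHom_single, single_mul_single, one_mul,
    Finsupp.sub_apply, coeff_single]
  exact sub_eq_self.mpr (coeff_opP_flr_mul_flr k _ x y)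

theorem coeff_nijRel_flr_mul_flr_self (a b : OpMonoid Z) :
    (nijRel k a b).coeff (OpMonoid.flr a * OpMonoid.flr b) = 1 := by
  rw [coeff_nijRel_flr_mul_flr, Finsupp.single_eq_same]

theorem coeff_nijRel_flr_mul_flr_of_ne {a b x y : OpMonoid Z} (h : ¬(a = x ∧ b = y)) :
    (nijRel k a b).coeff (OpMonoid.flr x * OpMonoid.flr y) = 0 := by
  rw [coeff_nijRel_flr_mul_flr, Finsupp.single_eq_of_ne' (mt OpMonoid.flr_mul_flr_inj.mp h)]

theorem ctxPoly_nijRel (q : OpCtx Z) (a b : OpMonoid Z) :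
    ctxPoly k q (nijRel k a b) = single (q.subst (OpMonoid.flr a * OpMonoid.flr b)) 1
      - ctxPoly k q (opP k (nijB k (single a 1) (single b 1))) := by
  rw [nijRel, nijenhuisDefect, ctxPoly_eq_mapDomainLinearMap, map_sub, opPHom_single, opPHom_single,
    single_mul_single, one_mul, mapDomainLinearMap_single, nijB_eq_nijenhuisMul]
  rfl

theorem nijStep_add_smul_ctxPoly_nijRel {g : kOpM k Z} {q : OpCtx Z} {a b : OpMonoid Z} {c : k}
    (hc : c ≠ 0) (hg : g.coeff (q.subst (OpMonoid.flr a * OpMonoid.flr b)) = 0) :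
    nijStep k (g + c • ctxPoly k q (nijRel k a b)) g := by
  have hcoeff : (g + c • ctxPoly k q (nijRel k a b)).coeff
      (q.subst (OpMonoid.flr a * OpMonoid.flr b)) = c := by
    rw [coeff_add, coeff_smul, Finsupp.add_apply, Finsupp.smul_apply, coeff_ctxPoly_subst,
      coeff_nijRel_flr_mul_flr_self, hg, zero_add, smul_eq_mul, mul_one]
  refine ⟨a, b, q, by rwa [hcoeff], ?_⟩
  rw [hcoeff, ctxPoly_nijRel, smul_sub, smul_single', mul_one]
  abel

theorem coeff_ctxPoly_hole_flr_mul {u x : OpMonoid Z} (hu : u ≠ 1)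
    (hux : FreeMonoid.toList u ⊆ FreeMonoid.toList x) (v m : OpMonoid Z) (f : kOpM k Z) :
    (ctxPoly k (.hole u v) f).coeff (OpMonoid.flr x * m) = 0 :=
  coeff_ctxPoly_of_notMem_range k (fun ⟨d, hd⟩ =>
    OpMonoid.flr_mul_ne_mul hu hux m (d * v) (by rw [← hd, OpCtx.subst, mul_assoc])) f

theorem coeff_ctxPoly_hole_mul_flr {w x : OpMonoid Z} (hw : w ≠ 1)
    (hwx : FreeMonoid.toList w ⊆ FreeMonoid.toList x) (u m : OpMonoid Z) (f : kOpM k Z) :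
    (ctxPoly k (.hole u w) f).coeff (m * OpMonoid.flr x) = 0 :=
  coeff_ctxPoly_of_notMem_range k (fun ⟨d, hd⟩ =>
    OpMonoid.mul_flr_ne_mul hw hwx m (u * d) (by rw [← hd, OpCtx.subst])) f

theorem nijB_single_assoc_sub (u v w : OpMonoid Z) :
    nijB k (nijB k (single u 1) (single v 1)) (single w 1)
        - nijB k (single u 1) (nijB k (single v 1) (single w 1)) =
      ctxPoly k (.hole u 1) (nijRel k v w) - ctxPoly k (.hole 1 w) (nijRel k u v)
        + ctxPoly k (.hole 1 1) (nijRel k u (v * w))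
        - ctxPoly k (.hole 1 1) (nijRel k (u * v) w) := by
  simp only [ctxPoly_hole, ← one_def, one_mul, mul_one, nijRel, nijB_eq_nijenhuisMul,
    nijenhuisMul_assoc_sub, single_mul_single]

end Polynomials

end OpAlg

open OpAlg in
/-- For the Nijenhuis OPI `φ_Nij = ⌊x⌋⌊y⌋ − ⌊B(x,y)⌋` with
`B(x, y) = ⌊x⌋y + x⌊y⌋ − ⌊xy⌋`, for all `u, v, w ∈ 𝔐(Z) ∖ {1}` the element
`B(B(u,v), w) − B(u, B(v,w))` rewrites to `0` under the rewriting system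
`Π = {⌊a⌋⌊b⌋ → ⌊B(a,b)⌋}` on `k𝔐(Z)`; i.e. `φ_Nij` is of Rota–Baxter type. -/
theorem nijenhuis_rota_baxter_type
    (k : Type*) [Field k] (Z : Type*) (u v w : OpMonoid Z)
    (hu : u ≠ 1) (hv : v ≠ 1) (hw : w ≠ 1) :
    Relation.ReflTransGen (nijStep k)
      (nijB k (nijB k (MonoidAlgebra.single u 1) (MonoidAlgebra.single v 1))
          (MonoidAlgebra.single w 1)
        - nijB k (MonoidAlgebra.single u 1)
            (nijB k (MonoidAlgebra.single v 1) (MonoidAlgebra.single w 1)))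
      0 := by
  set R₁ := ctxPoly k (.hole 1 1) (nijRel k u (v * w))
  set R₂ := ctxPoly k (.hole 1 1) (nijRel k (u * v) w)
  set R₃ := ctxPoly k (.hole 1 w) (nijRel k u v)
  set R₄ := ctxPoly k (.hole u 1) (nijRel k v w)
  have hR₂ : R₂.coeff (OpMonoid.flr u * OpMonoid.flr (v * w)) = 0 := by
    simp only [R₂, ctxPoly_hole_one_one]
    exact coeff_nijRel_flr_mul_flr_of_ne k
      fun h => hv (OpMonoid.mul_left_cancel (h.1.trans (mul_one u).symm))
  have hR₃ (x m : OpMonoid Z) (hwx : FreeMonoid.toList w ⊆ FreeMonoid.toList x) :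
      R₃.coeff (m * OpMonoid.flr x) = 0 :=
    coeff_ctxPoly_hole_mul_flr k hw hwx 1 m _
  have hR₄ (x m : OpMonoid Z) (hux : FreeMonoid.toList u ⊆ FreeMonoid.toList x) :
      R₄.coeff (OpMonoid.flr x * m) = 0 :=
    coeff_ctxPoly_hole_flr_mul k hu hux 1 m _
  rw [nijB_single_assoc_sub, show R₄ - R₃ + R₁ - R₂ =
    0 + (1 : k) • R₄ + (-1 : k) • R₃ + (-1 : k) • R₂ + (1 : k) • R₁ by module]
  refine .head (nijStep_add_smul_ctxPoly_nijRel k one_ne_zero ?_) <|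
    .head (nijStep_add_smul_ctxPoly_nijRel k (neg_ne_zero.mpr one_ne_zero) ?_) <|
    .head (nijStep_add_smul_ctxPoly_nijRel k (neg_ne_zero.mpr one_ne_zero) ?_) <|
    .single (nijStep_add_smul_ctxPoly_nijRel k one_ne_zero ?_)
  all_goals
    simp only [OpCtx.subst, one_mul, mul_one, MonoidAlgebra.coeff_add, MonoidAlgebra.coeff_smul,
      MonoidAlgebra.coeff_zero, Finsupp.add_apply, Finsupp.smul_apply, Finsupp.zero_apply]
  · rw [hR₄ u _ (List.Subset.refl _), hR₃ (v * w) _ (List.subset_append_right _ _), hR₂]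
    simp
  · rw [hR₄ (u * v) _ (List.subset_append_left _ _), hR₃ w _ (List.Subset.refl _)]
    simp
  · rw [mul_assoc, hR₄ u _ (List.Subset.refl _)]
    simp
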